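/- Let A be an n-by-n Hermitian matrix with eigenpair (λ, x) where λ is an eigenvalue of largest absolute value among all eigenvalues of A (λ = λ_max), and assume A is nonsingular. Then for every nonzero vector y in ℂ^n, sin∠(x, Ay) ≤ sin∠(x, y); that is, one step of the power method applied to y does not worsen the angle to the dominant eigenvector. -/

import Mathlib

open Matrix
open scoped ComplexOrder

noncomputable def hnorm {n : ℕ} (x : Fin n → ℂ) : ℝ :=
  Real.sqrt ((star x ⬝ᵥ x).re)

noncomputable def cosAngle {n : ℕ} (x y : Fin n → ℂ) : ℝ :=
  ‖star x ⬝ᵥ y‖ / (hnorm x * hnorm y)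

noncomputable def sinAngle {n : ℕ} (x y : Fin n → ℂ) : ℝ :=
  Real.sqrt (1 - cosAngle x y ^ 2)

noncomputable def sinAngleSub {n : ℕ} (x : Fin n → ℂ) (K : Submodule ℂ (Fin n → ℂ)) : ℝ :=
  sInf {s : ℝ | ∃ y ∈ K, y ≠ 0 ∧ s = sinAngle x y}

noncomputable def sinAngleSubSub {n : ℕ} (X K : Submodule ℂ (Fin n → ℂ)) : ℝ :=
  sInf {s : ℝ | ∃ x ∈ X, x ≠ 0 ∧ ∃ y ∈ K, y ≠ 0 ∧ s = sinAngle x y}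

def Eigenpair {n : ℕ} (A : Matrix (Fin n) (Fin n) ℂ) (μ : ℂ) (v : Fin n → ℂ) : Prop :=
  v ≠ 0 ∧ A *ᵥ v = μ • v

noncomputable def specNorm {n : ℕ} (M : Matrix (Fin n) (Fin n) ℂ) : ℝ :=
  sSup {r : ℝ | ∃ v : Fin n → ℂ, hnorm v = 1 ∧ r = hnorm (M *ᵥ v)}

noncomputable def frobNorm {m p : ℕ} (M : Matrix (Fin m) (Fin p) ℂ) : ℝ :=
  Real.sqrt (∑ i, ∑ j, ‖M i j‖ ^ 2)

noncomputable def specCond {n : ℕ} (M : Matrix (Fin n) (Fin n) ℂ) : ℝ :=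
  sSup {r : ℝ | ∃ μ ∈ spectrum ℂ M, r = ‖μ‖} /
    sInf {r : ℝ | ∃ μ ∈ spectrum ℂ M, r = ‖μ‖}

def RitzPair {n : ℕ} (A : Matrix (Fin n) (Fin n) ℂ) (K : Submodule ℂ (Fin n → ℂ))
    (μ : ℂ) (u : Fin n → ℂ) : Prop :=
  u ∈ K ∧ u ≠ 0 ∧ ∀ y ∈ K, star y ⬝ᵥ (A *ᵥ u - μ • u) = 0

def HarmonicRitzPair {n : ℕ} (A : Matrix (Fin n) (Fin n) ℂ) (σ : ℂ)
    (K : Submodule ℂ (Fin n → ℂ)) (θ : ℂ) (v : Fin n → ℂ) : Prop :=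
  v ∈ K ∧ v ≠ 0 ∧ ∀ y ∈ K, star ((A - σ • 1) *ᵥ y) ⬝ᵥ (A *ᵥ v - θ • v) = 0

def THarmonicRitzPair {n : ℕ} (A T : Matrix (Fin n) (Fin n) ℂ) (σ : ℂ)
    (K : Submodule ℂ (Fin n → ℂ)) (θ : ℂ) (v : Fin n → ℂ) : Prop :=
  v ∈ K ∧ v ≠ 0 ∧ ∀ y ∈ K, star ((A - σ • 1) *ᵥ y) ⬝ᵥ (T *ᵥ (A *ᵥ v - θ • v)) = 0

def IsOrthProjOn {n : ℕ} (P : Matrix (Fin n) (Fin n) ℂ)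
    (Q : Submodule ℂ (Fin n → ℂ)) : Prop :=
  P.IsHermitian ∧ P * P = P ∧ (∀ v, P *ᵥ v ∈ Q) ∧ (∀ v ∈ Q, P *ᵥ v = v)

/-!
For a Hermitian `A` with eigenpair `(λ, x)`, self-adjointness gives `x* A y = conj λ · x* y`, so
`|x* A y| = |λ| |x* y|`, while `‖A y‖ ≤ |λ| ‖y‖` because the l2 operator norm of a Hermitian matrix
is its spectral radius. Hence `cos∠(x, A y) ≥ cos∠(x, y)`, and `sin` decreases as `cos` grows.
-/

theorem hnorm_eq_norm_toLp {n : ℕ} (v : Fin n → ℂ) : hnorm v = ‖WithLp.toLp 2 v‖ := by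
  rw [hnorm, @norm_eq_sqrt_re_inner ℂ, EuclideanSpace.inner_toLp_toLp, dotProduct_comm]
  rfl

theorem hnorm_pos {n : ℕ} {v : Fin n → ℂ} (hv : v ≠ 0) : 0 < hnorm v := by
  simpa [hnorm_eq_norm_toLp] using hv

theorem cosAngle_nonneg {n : ℕ} (x y : Fin n → ℂ) : 0 ≤ cosAngle x y := by
  unfold cosAngle hnorm
  positivity

theorem sinAngle_le_sinAngle_of_cosAngle_le {n : ℕ} {x y x' y' : Fin n → ℂ}
    (h : cosAngle x y ≤ cosAngle x' y') : sinAngle x' y' ≤ sinAngle x y := by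
  unfold sinAngle
  gcongr
  exact cosAngle_nonneg x y

theorem cosAngle_le_cosAngle_of_norm_dotProduct_eq {n : ℕ} {x y z : Fin n → ℂ} {c : ℝ}
    (hc : 0 < c) (hx : x ≠ 0) (hdot : ‖star x ⬝ᵥ z‖ = c * ‖star x ⬝ᵥ y‖)
    (hz : hnorm z ≤ c * hnorm y) : cosAngle x y ≤ cosAngle x z := by
  unfold cosAngle
  rcases eq_or_ne z 0 with rfl | hz0
  · have : ‖star x ⬝ᵥ y‖ = 0 := by simpa [hc.ne'] using hdot.symm
    simp [this]
  have hxz : 0 < hnorm x * hnorm z := mul_pos (hnorm_pos hx) (hnorm_pos hz0)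
  calc ‖star x ⬝ᵥ y‖ / (hnorm x * hnorm y)
      = c * ‖star x ⬝ᵥ y‖ / (c * (hnorm x * hnorm y)) := (mul_div_mul_left _ _ hc.ne').symm
    _ ≤ c * ‖star x ⬝ᵥ y‖ / (hnorm x * hnorm z) := by
        refine div_le_div_of_nonneg_left (by positivity) hxz ?_
        rw [mul_left_comm]
        exact mul_le_mul_of_nonneg_left hz (hnorm_pos hx).le
    _ = ‖star x ⬝ᵥ z‖ / (hnorm x * hnorm z) := by rw [hdot]

theorem Eigenpair.of_mem_spectrum {n : ℕ} {A : Matrix (Fin n) (Fin n) ℂ} {μ : ℂ}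
    (hμ : μ ∈ spectrum ℂ A) : ∃ v, Eigenpair A μ v := by
  rw [← spectrum_toLin', ← Module.End.hasEigenvalue_iff_mem_spectrum] at hμ
  obtain ⟨v, hv⟩ := hμ.exists_hasEigenvector
  exact ⟨v, hv.2, by simpa using hv.apply_eq_smul⟩

theorem Eigenpair.ne_zero_of_isUnit_det {n : ℕ} {A : Matrix (Fin n) (Fin n) ℂ} {μ : ℂ}
    {v : Fin n → ℂ} (hv : Eigenpair A μ v) (hA : IsUnit A.det) : μ ≠ 0 := by
  rintro rfl
  refine hv.1 (mulVec_injective_iff_isUnit.2 ((isUnit_iff_isUnit_det A).2 hA) ?_)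
  rw [hv.2, zero_smul, mulVec_zero]

theorem Eigenpair.star_dotProduct_mulVec {n : ℕ} {A : Matrix (Fin n) (Fin n) ℂ}
    (hA : A.IsHermitian) {μ : ℂ} {v : Fin n → ℂ} (hv : Eigenpair A μ v) (w : Fin n → ℂ) :
    star v ⬝ᵥ (A *ᵥ w) = star μ * (star v ⬝ᵥ w) := by
  rw [dotProduct_mulVec, ← hA.eq, ← star_mulVec, hv.2, star_smul, smul_dotProduct,
    smul_eq_mul]

section
open scoped Matrix.Norms.L2Operator

theorem Matrix.IsHermitian.l2_opNorm_le {n : ℕ} {A : Matrix (Fin n) (Fin n) ℂ}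
    (hA : A.IsHermitian) {c : ℝ} (hc : 0 ≤ c) (hbound : ∀ μ v, Eigenpair A μ v → ‖μ‖ ≤ c) :
    ‖A‖ ≤ c := by
  rw [← hA.isSelfAdjoint.toReal_spectralRadius_complex_eq_norm]
  refine ENNReal.toReal_le_of_le_ofReal hc (iSup₂_le fun μ hμ => ?_)
  obtain ⟨v, hv⟩ := Eigenpair.of_mem_spectrum hμ
  exact (ENNReal.le_ofReal_iff_toReal_le ENNReal.coe_ne_top hc).2 (hbound μ v hv)

theorem Matrix.IsHermitian.hnorm_mulVec_le {n : ℕ} {A : Matrix (Fin n) (Fin n) ℂ}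
    (hA : A.IsHermitian) {c : ℝ} (hc : 0 ≤ c) (hbound : ∀ μ v, Eigenpair A μ v → ‖μ‖ ≤ c)
    (v : Fin n → ℂ) : hnorm (A *ᵥ v) ≤ c * hnorm v := by
  rw [hnorm_eq_norm_toLp, hnorm_eq_norm_toLp]
  calc ‖WithLp.toLp 2 (A *ᵥ v)‖ ≤ ‖A‖ * ‖WithLp.toLp 2 v‖ := A.l2_opNorm_mulVec _
    _ ≤ c * ‖WithLp.toLp 2 v‖ := by gcongr; exact hA.l2_opNorm_le hc hbound

end

theorem stmt12_power_method_improves_general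
    {n : ℕ} (A : Matrix (Fin n) (Fin n) ℂ) (hA : A.IsHermitian) (hdet : IsUnit A.det)
    (l : ℂ) (x : Fin n → ℂ) (hx : Eigenpair A l x)
    (hmax : ∀ μ v, Eigenpair A μ v → ‖μ‖ ≤ ‖l‖)
    (y : Fin n → ℂ) :
    sinAngle x (A *ᵥ y) ≤ sinAngle x y := by
  apply sinAngle_le_sinAngle_of_cosAngle_le
  refine cosAngle_le_cosAngle_of_norm_dotProduct_eq
    (norm_pos_iff.2 (hx.ne_zero_of_isUnit_det hdet)) hx.1 ?_
    (hA.hnorm_mulVec_le (norm_nonneg l) hmax y)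
  rw [hx.star_dotProduct_mulVec hA, norm_mul, norm_star]

/-- for the largest-magnitude eigenvalue, one step of the power method does
not worsen the angle: sin∠(x, Ay) ≤ sin∠(x, y). -/
theorem stmt12_power_method_improves
    {n : ℕ} (A : Matrix (Fin n) (Fin n) ℂ) (hA : A.IsHermitian) (hdet : IsUnit A.det)
    (l : ℂ) (x : Fin n → ℂ) (hx : Eigenpair A l x)
    (hmax : ∀ μ v, Eigenpair A μ v → ‖μ‖ ≤ ‖l‖)
    (y : Fin n → ℂ) (hy : y ≠ 0) :
    sinAngle x (A *ᵥ y) ≤ sinAngle x y :=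
  stmt12_power_method_improves_general A hA hdet l x hx hmax y
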